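/- Let X be a finite connected graph and let Q be the simple random walk kernel, Q(x,y) = 1/d_x for y ∼ x, with stationary measure π(x) = d_x / Σ_v d_v, and let θ be the logarithmic mean. Assume the global gradient estimate with constant κ holds: for all probability densities ρ ∈ D(X), all f : X → ℝ and all t ≥ 0, (1/2)·Σ_{u,v} (P_t f(v) − P_t f(u))² θ(ρ(u),ρ(v)) Q(u,v) π(u) ≤ e^{−2κt} · (1/2)·Σ_{u,v} (f(v) − f(u))² θ(P_t ρ(u), P_t ρ(v)) Q(u,v) π(u). Then for all f : X → ℝ, x ∈ X and t ≥ 0, Γ(P_t f)(x) ≤ c · e^{−2κt} · ‖P_t Γ(f)‖_∞, where c = D·log D/(D − 1) and D ≥ 2 is the maximal vertex degree. -/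

import Mathlib

/-- The logarithmic mean: `θ(a,b) = (a-b)/(log a - log b)` for distinct positive `a,b`,
`θ(a,a) = a`, and `θ(a,b) = 0` when `a = 0` or `b = 0`. -/
noncomputable def logMean (a b : ℝ) : ℝ :=
  if a = 0 ∨ b = 0 then 0
  else if a = b then a
  else (a - b) / (Real.log a - Real.log b)

/-- The discrete Laplacian `Δf(x) = Σ_y (f(y)-f(x)) Q(x,y)`. -/
noncomputable def lap {X : Type*} [Fintype X] (Q : X → X → ℝ) (f : X → ℝ) (x : X) : ℝ :=
  ∑ y, (f y - f x) * Q x y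

/-- The heat semigroup `P_t = e^{tΔ}`, realized via the matrix exponential of `t•(Q - I)`.
(When `Σ_y Q(x,y) = 1`, the matrix `Q - I` acts on functions exactly as `Δ` does.) -/
noncomputable def heat {X : Type*} [Fintype X] [DecidableEq X] (Q : X → X → ℝ) (t : ℝ)
    (f : X → ℝ) : X → ℝ :=
  (NormedSpace.exp (t • (Matrix.of fun x y => Q x y - if x = y then (1 : ℝ) else 0))).mulVec f

/-- The carré du champ operator `Γ(f)(x) = Σ_y (f(y)-f(x))² Q(x,y)`. -/
noncomputable def gam {X : Type*} [Fintype X] (Q : X → X → ℝ) (f : X → ℝ) (x : X) : ℝ :=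
  ∑ y, (f y - f x) ^ 2 * Q x y

/-!
Fix `x` and test the global estimate on the density `ρ` equal to `a` at `x`, to `a / D` at the
neighbours of `x` and to `0` elsewhere. Since `∑_{v ∼ x} π v ≤ D π x`, the normalisation gives
`a π x ≥ 1/2`. On the left, the edges at `x` alone contribute `θ(a, a/D) π x Γ(P_t f)(x)`, and
`θ(a, a/D) = a (D - 1) / (D log D)`. On the right, `θ` is at most the arithmetic mean, so by
reversibility the energy is at most `½ ∑ P_tρ Γ(f) π = ½ ∑ ρ P_tΓ(f) π ≤ ½ ‖P_tΓ(f)‖_∞`.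
-/

section LogMean

open Real

theorem two_mul_sub_div_add_le_log_sub_log {a b : ℝ} (hb : 0 < b) (hba : b ≤ a) :
    2 * (a - b) / (a + b) ≤ log a - log b := by
  set y := (a - b) / (a + b) with hy
  have ha : 0 < a := hb.trans_le hba
  have hab : 0 < a + b := by linarith
  have hy1 : |y| < 1 := by
    rw [abs_of_nonneg (div_nonneg (by linarith) hab.le), div_lt_one hab]
    linarith
  have hlog : log (1 + y) - log (1 - y) = log a - log b := by
    have h1 : 1 + y = 2 * a / (a + b) := by rw [hy]; field_simp; ring
    have h2 : 1 - y = 2 * b / (a + b) := by rw [hy]; field_simp; ring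
    rw [h1, h2, log_div (by positivity) hab.ne', log_div (by positivity) hab.ne',
      log_mul two_ne_zero ha.ne', log_mul two_ne_zero hb.ne']
    ring
  -- the leading term `2y` of the series `log (1 + y) - log (1 - y) = 2 ∑ y^(2k+1)/(2k+1)`
  have := le_hasSum (hasSum_log_sub_log_of_abs_lt_one hy1) 0 fun k _ => by positivity
  rw [hlog] at this
  simpa [mul_div_assoc] using this

theorem logMean_comm (a b : ℝ) : logMean a b = logMean b a := by
  unfold logMean
  by_cases h : a = b
  · simp [h]
  · rw [if_neg h, if_neg (Ne.symm h), ← neg_sub b a, ← neg_sub (log b), neg_div_neg_eq]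
    simp only [or_comm]

theorem logMean_of_lt {a b : ℝ} (hb : 0 < b) (hba : b < a) :
    logMean a b = (a - b) / (log a - log b) := by
  rw [logMean, if_neg (by rintro (h | h) <;> linarith), if_neg hba.ne']

theorem logMean_nonneg {a b : ℝ} (ha : 0 ≤ a) (hb : 0 ≤ b) : 0 ≤ logMean a b := by
  wlog hba : b ≤ a generalizing a b
  · rw [logMean_comm]; exact this hb ha (le_of_not_ge hba)
  rcases hb.eq_or_lt with rfl | hb
  · simp [logMean]
  rcases hba.eq_or_lt with rfl | hba
  · simpa [logMean, hb.ne'] using hb.le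
  rw [logMean_of_lt hb hba]
  exact div_nonneg (by linarith) (by linarith [log_lt_log hb hba])

theorem logMean_le_add_div_two {a b : ℝ} (ha : 0 ≤ a) (hb : 0 ≤ b) :
    logMean a b ≤ (a + b) / 2 := by
  wlog hba : b ≤ a generalizing a b
  · rw [logMean_comm, add_comm]; exact this hb ha (le_of_not_ge hba)
  rcases hb.eq_or_lt with rfl | hb
  · simp [logMean]; linarith
  rcases hba.eq_or_lt with rfl | hba
  · simp [logMean, hb.ne']
  rw [logMean_of_lt hb hba, div_le_iff₀ (by linarith [log_lt_log hb hba])]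
  have := two_mul_sub_div_add_le_log_sub_log hb hba.le
  rw [div_le_iff₀ (by linarith)] at this
  linarith

theorem logMean_mul_inv_self {a c : ℝ} (ha : 0 < a) (hc : 1 < c) :
    logMean a (a * c⁻¹) = a * ((c - 1) / (c * log c)) := by
  have hc0 : 0 < c := by linarith
  rw [logMean_of_lt (by positivity) (mul_lt_of_lt_one_right ha (inv_lt_one_of_one_lt₀ hc)),
    log_mul ha.ne' (by positivity), log_inv, show log a - (log a + -log c) = log c by ring]
  have := (log_pos hc).ne'
  field_simp

end LogMean

open Matrix NormedSpace

section MatrixExp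

variable {X : Type*} [Fintype X] [DecidableEq X]

theorem Matrix.exp_apply_nonneg {A : Matrix X X ℝ} (hA : ∀ i j, 0 ≤ A i j) (i j : X) :
    0 ≤ exp A i j := by
  open scoped Norms.Operator in
  have hexp := exp_series_hasSum_exp' (𝕂 := ℝ) A
  exact (Pi.hasSum.mp (Pi.hasSum.mp hexp i) j).nonneg
    fun n => mul_nonneg (by positivity) (pow_apply_nonneg hA n i j)

theorem Matrix.exp_sub_smul_one (B : Matrix X X ℝ) (s : ℝ) :
    exp (B - s • 1) = Real.exp (-s) • exp B := by
  rw [sub_eq_add_neg, Matrix.exp_add_of_commute _ _ ((Commute.one_right B).smul_right s).neg_right,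
    ← neg_smul, smul_one_eq_diagonal, exp_diagonal]
  ext i j
  simp [mul_diagonal, Real.exp_eq_exp_ℝ, mul_comm]

-- Detailed balance says `diagonal π * A = Aᵀ * diagonal π`, a semiconjugacy that `exp` preserves.
theorem Matrix.exp_detailed_balance {A : Matrix X X ℝ} {π : X → ℝ}
    (hA : ∀ i j, π i * A i j = π j * A j i) (i j : X) :
    π i * exp A i j = π j * exp A j i := by
  have h : SemiconjBy (diagonal π) A Aᵀ := by
    ext i j
    simp [diagonal_mul, mul_diagonal, hA i j, mul_comm]
  have hexp : SemiconjBy (diagonal π) (exp A) (exp Aᵀ) := by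
    open scoped Norms.Operator in exact h.exp_right
  have := congrFun₂ hexp i j
  rw [exp_transpose] at this
  simpa [SemiconjBy, diagonal_mul, mul_diagonal, mul_comm] using this

end MatrixExp

section Heat

variable {X : Type*} [Fintype X] [DecidableEq X] {Q : X → X → ℝ} {π : X → ℝ}

noncomputable def heatMatrix (Q : X → X → ℝ) (t : ℝ) : Matrix X X ℝ :=
  exp (t • (Matrix.of fun x y => Q x y - if x = y then (1 : ℝ) else 0))

theorem heat_eq_heatMatrix_mulVec (Q : X → X → ℝ) (t : ℝ) (f : X → ℝ) :
    heat Q t f = heatMatrix Q t *ᵥ f :=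
  rfl

theorem heatMatrix_nonneg (hQ : ∀ u v, 0 ≤ Q u v) {t : ℝ} (ht : 0 ≤ t) (i j : X) :
    0 ≤ heatMatrix Q t i j := by
  have hgen : t • (Matrix.of fun x y => Q x y - if x = y then (1 : ℝ) else 0)
      = t • Matrix.of Q - t • 1 := by
    ext i j
    simp only [Matrix.smul_apply, Matrix.of_apply, Matrix.sub_apply, Matrix.one_apply, smul_eq_mul]
    ring
  rw [heatMatrix, hgen, exp_sub_smul_one, Matrix.smul_apply, smul_eq_mul]
  exact mul_nonneg (Real.exp_pos _).le
    (exp_apply_nonneg (fun i j => mul_nonneg ht (hQ i j)) i j)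

theorem heatMatrix_detailed_balance (hrev : ∀ u v, π u * Q u v = π v * Q v u) (t : ℝ)
    (i j : X) : π i * heatMatrix Q t i j = π j * heatMatrix Q t j i := by
  refine exp_detailed_balance (fun i j => ?_) i j
  simp only [Matrix.smul_apply, Matrix.of_apply, smul_eq_mul]
  by_cases h : i = j
  · rw [h]
  · rw [if_neg h, if_neg (Ne.symm h), sub_zero, sub_zero]
    linear_combination t * hrev i j

theorem heat_nonneg (hQ : ∀ u v, 0 ≤ Q u v) {t : ℝ} (ht : 0 ≤ t) {f : X → ℝ}
    (hf : ∀ z, 0 ≤ f z) (z : X) : 0 ≤ heat Q t f z :=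
  Finset.sum_nonneg fun y _ => mul_nonneg (heatMatrix_nonneg hQ ht z y) (hf y)

theorem sum_heat_mul_mul_eq_sum_mul_heat_mul (hrev : ∀ u v, π u * Q u v = π v * Q v u) (t : ℝ)
    (g h : X → ℝ) :
    ∑ u, heat Q t g u * h u * π u = ∑ u, g u * heat Q t h u * π u := by
  simp only [heat_eq_heatMatrix_mulVec, mulVec, dotProduct, Finset.sum_mul, Finset.mul_sum]
  rw [Finset.sum_comm]
  refine Finset.sum_congr rfl fun u _ => Finset.sum_congr rfl fun v _ => ?_
  linear_combination g u * h v * heatMatrix_detailed_balance hrev t v u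

end Heat

section Energy

variable {X : Type*} [Fintype X] {Q : X → X → ℝ} {π : X → ℝ}

noncomputable def logEnergy (Q : X → X → ℝ) (π ρ f : X → ℝ) : ℝ :=
  1 / 2 * ∑ u, ∑ v, (f v - f u) ^ 2 * logMean (ρ u) (ρ v) * Q u v * π u

theorem sum_sum_swap_mul_of_detailed_balance (hrev : ∀ u v, π u * Q u v = π v * Q v u)
    (F : X → X → ℝ) : ∑ u, ∑ v, F v u * Q u v * π u = ∑ u, ∑ v, F u v * Q u v * π u := by
  rw [Finset.sum_comm]
  refine Finset.sum_congr rfl fun u _ => Finset.sum_congr rfl fun v _ => ?_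
  linear_combination F u v * hrev v u

theorem sum_row_add_sum_col_le_sum_sum [DecidableEq X] {T : X → X → ℝ}
    (hT : ∀ u v, 0 ≤ T u v) {x : X} (hxx : T x x = 0) :
    ∑ v, T x v + ∑ u, T u x ≤ ∑ u, ∑ v, T u v := by
  rw [← Finset.add_sum_erase _ (fun u => ∑ v, T u v) (Finset.mem_univ x), add_le_add_iff_left,
    ← Finset.add_sum_erase _ (fun u => T u x) (Finset.mem_univ x), hxx, zero_add]
  exact Finset.sum_le_sum fun u _ => Finset.single_le_sum (fun v _ => hT u v) (Finset.mem_univ x)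

theorem logEnergy_le_sum_mul_gam (hQ : ∀ u v, 0 ≤ Q u v) (hπ : ∀ u, 0 ≤ π u)
    (hrev : ∀ u v, π u * Q u v = π v * Q v u) {ρ : X → ℝ} (hρ : ∀ z, 0 ≤ ρ z) (f : X → ℝ) :
    logEnergy Q π ρ f ≤ 1 / 2 * ∑ u, ρ u * gam Q f u * π u := by
  have hsym : ∑ u, ∑ v, (f v - f u) ^ 2 * ρ v * Q u v * π u
      = ∑ u, ∑ v, (f v - f u) ^ 2 * ρ u * Q u v * π u :=
    (sum_sum_swap_mul_of_detailed_balance hrev fun u v => (f u - f v) ^ 2 * ρ u).trans <|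
      Finset.sum_congr rfl fun u _ => Finset.sum_congr rfl fun v _ => by ring
  calc logEnergy Q π ρ f
      ≤ 1 / 2 * ∑ u, ∑ v, (f v - f u) ^ 2 * ((ρ u + ρ v) / 2) * Q u v * π u := by
        unfold logEnergy
        gcongr with u _ v _
        · exact hπ u
        · exact hQ u v
        · exact logMean_le_add_div_two (hρ u) (hρ v)
    _ = 1 / 4 * (∑ u, ∑ v, (f v - f u) ^ 2 * ρ u * Q u v * π u
          + ∑ u, ∑ v, (f v - f u) ^ 2 * ρ v * Q u v * π u) := by
        simp only [Finset.mul_sum, ← Finset.sum_add_distrib]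
        exact Finset.sum_congr rfl fun u _ => Finset.sum_congr rfl fun v _ => by ring
    _ = 1 / 2 * ∑ u, ρ u * gam Q f u * π u := by
        rw [hsym]
        simp only [gam, Finset.mul_sum, Finset.sum_mul, ← Finset.sum_add_distrib]
        exact Finset.sum_congr rfl fun u _ => Finset.sum_congr rfl fun v _ => by ring

theorem logEnergy_heat_le [DecidableEq X] (hQ : ∀ u v, 0 ≤ Q u v) (hπ : ∀ u, 0 ≤ π u)
    (hrev : ∀ u v, π u * Q u v = π v * Q v u) {ρ : X → ℝ} (hρ : ∀ z, 0 ≤ ρ z)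
    (hρπ : ∑ z, ρ z * π z = 1) {t : ℝ} (ht : 0 ≤ t) (f : X → ℝ) :
    logEnergy Q π (heat Q t ρ) f ≤ 1 / 2 * ⨆ z, |heat Q t (gam Q f) z| := by
  set M := ⨆ z, |heat Q t (gam Q f) z|
  have hM : ∀ u, heat Q t (gam Q f) u ≤ M := fun u =>
    (le_abs_self _).trans
      (le_ciSup (f := fun z => |heat Q t (gam Q f) z|) (Set.finite_range _).bddAbove u)
  calc logEnergy Q π (heat Q t ρ) f
      ≤ 1 / 2 * ∑ u, heat Q t ρ u * gam Q f u * π u :=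
        logEnergy_le_sum_mul_gam hQ hπ hrev (heat_nonneg hQ ht hρ) f
    _ = 1 / 2 * ∑ u, ρ u * heat Q t (gam Q f) u * π u := by
        rw [sum_heat_mul_mul_eq_sum_mul_heat_mul hrev]
    _ ≤ 1 / 2 * ∑ u, ρ u * M * π u := by
        gcongr with u _
        · exact hπ u
        · exact hρ u
        · exact hM u
    _ = 1 / 2 * M := by
        simp only [mul_right_comm _ M, ← Finset.sum_mul, hρπ, one_mul]

theorem logEnergy_ge_row (hQ : ∀ u v, 0 ≤ Q u v) (hπ : ∀ u, 0 ≤ π u)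
    (hrev : ∀ u v, π u * Q u v = π v * Q v u) {ρ : X → ℝ} (hρ : ∀ z, 0 ≤ ρ z) (f : X → ℝ)
    (x : X) :
    π x * ∑ v, (f v - f x) ^ 2 * logMean (ρ x) (ρ v) * Q x v ≤ logEnergy Q π ρ f := by
  classical
  set T : X → X → ℝ := fun u v => (f v - f u) ^ 2 * logMean (ρ u) (ρ v) * Q u v * π u
  have hT : ∀ u v, 0 ≤ T u v := fun u v =>
    mul_nonneg (mul_nonneg (mul_nonneg (sq_nonneg _) (logMean_nonneg (hρ u) (hρ v))) (hQ u v))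
      (hπ u)
  have hTsymm : ∀ u v, T u v = T v u := fun u v => by
    simp only [T, logMean_comm (ρ u)]
    linear_combination (f v - f u) ^ 2 * logMean (ρ v) (ρ u) * hrev u v
  have := sum_row_add_sum_col_le_sum_sum hT (x := x) (by simp [T])
  simp only [← hTsymm x] at this
  have hrow : π x * ∑ v, (f v - f x) ^ 2 * logMean (ρ x) (ρ v) * Q x v = ∑ v, T x v := by
    rw [Finset.mul_sum]
    exact Finset.sum_congr rfl fun v _ => by ring
  unfold logEnergy
  linarith

end Energy

section SimpleRandomWalk

variable {X : Type*} [Fintype X] (G : SimpleGraph X) [DecidableRel G.Adj]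

noncomputable def srwKernel (x y : X) : ℝ :=
  if G.Adj x y then (G.degree x : ℝ)⁻¹ else 0

noncomputable def srwMeasure (x : X) : ℝ :=
  (G.degree x : ℝ) / ∑ v, (G.degree v : ℝ)

variable {G}

theorem srwKernel_nonneg (u v : X) : 0 ≤ srwKernel G u v := by
  unfold srwKernel
  split_ifs <;> positivity

theorem srwMeasure_nonneg (u : X) : 0 ≤ srwMeasure G u := by
  unfold srwMeasure
  positivity

theorem srwMeasure_pos {x : X} (hx : 0 < G.degree x) : 0 < srwMeasure G x :=
  div_pos (by exact_mod_cast hx)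
    (Finset.sum_pos' (fun v _ => by positivity) ⟨x, Finset.mem_univ x, by exact_mod_cast hx⟩)

theorem srw_detailed_balance (u v : X) :
    srwMeasure G u * srwKernel G u v = srwMeasure G v * srwKernel G v u := by
  unfold srwMeasure srwKernel
  by_cases h : G.Adj u v
  · have hu : (G.degree u : ℝ) ≠ 0 := by
      exact_mod_cast ((G.degree_pos_iff_exists_adj u).mpr ⟨v, h⟩).ne'
    have hv : (G.degree v : ℝ) ≠ 0 := by
      exact_mod_cast ((G.degree_pos_iff_exists_adj v).mpr ⟨u, h.symm⟩).ne'
    rw [if_pos h, if_pos h.symm]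
    field_simp
  · rw [if_neg h, if_neg fun h' => h h'.symm, mul_zero, mul_zero]

theorem gam_srwKernel_of_degree_eq_zero {x : X} (hx : G.degree x = 0) (g : X → ℝ) :
    gam (srwKernel G) g x = 0 :=
  Finset.sum_eq_zero fun y _ => by
    have hxy : ¬G.Adj x y := fun h => ((G.degree_pos_iff_exists_adj x).mpr ⟨y, h⟩).ne' hx
    simp [srwKernel, hxy]

theorem sum_neighborFinset_srwMeasure_le {D : ℝ} (hD : ∀ v, (G.degree v : ℝ) ≤ D) (x : X) :
    ∑ v ∈ G.neighborFinset x, srwMeasure G v ≤ D * srwMeasure G x := by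
  have hS : 0 ≤ ∑ v, (G.degree v : ℝ) := by positivity
  calc ∑ v ∈ G.neighborFinset x, srwMeasure G v
      ≤ ∑ _v ∈ G.neighborFinset x, D / ∑ v, (G.degree v : ℝ) :=
        Finset.sum_le_sum fun v _ => div_le_div_of_nonneg_right (hD v) hS
    _ = D * srwMeasure G x := by
        rw [Finset.sum_const, SimpleGraph.card_neighborFinset_eq_degree, nsmul_eq_mul, srwMeasure]
        ring

theorem exists_density_gam_le_logEnergy [DecidableEq X] {x : X} (hx : 0 < G.degree x) {D : ℝ}
    (hD : ∀ v, (G.degree v : ℝ) ≤ D) (hD1 : 1 < D) :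
    ∃ ρ : X → ℝ, (∀ z, 0 ≤ ρ z) ∧ ∑ z, ρ z * srwMeasure G z = 1 ∧
      ∀ g : X → ℝ, (D - 1) / (D * Real.log D) / 2 * gam (srwKernel G) g x ≤
        logEnergy (srwKernel G) (srwMeasure G) ρ g := by
  set π := srwMeasure G
  set Q := srwKernel G
  set k := (D - 1) / (D * Real.log D)
  -- `ρ ∝ w` makes `logMean (ρ x) (ρ v)` the same multiple `k` of `ρ x` on every edge at `x`
  set w : X → ℝ := fun u => (if u = x then 1 else 0) + if G.Adj x u then D⁻¹ else 0
  set m := ∑ z, w z * π z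
  have hπx : 0 < π x := srwMeasure_pos hx
  have hm : m = π x + D⁻¹ * ∑ v ∈ G.neighborFinset x, π v := by
    simp [m, w, add_mul, Finset.sum_add_distrib, ite_mul, Finset.sum_ite, Finset.mul_sum,
      SimpleGraph.neighborFinset_eq_filter]
  have hm0 : 0 < m := by
    rw [hm]
    exact add_pos_of_pos_of_nonneg hπx (mul_nonneg (inv_nonneg.mpr (by linarith))
      (Finset.sum_nonneg fun v _ => srwMeasure_nonneg v))
  have hm2 : m ≤ 2 * π x := by
    have := sum_neighborFinset_srwMeasure_le hD x
    rw [hm, two_mul, add_le_add_iff_left, inv_mul_le_iff₀ (by linarith)]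
    exact this
  have hw : ∀ z, 0 ≤ w z := fun z => by positivity
  refine ⟨fun u => m⁻¹ * w u, fun z => mul_nonneg (inv_pos.mpr hm0).le (hw z), ?_, fun g => ?_⟩
  · simp only [mul_assoc, ← Finset.mul_sum]
    exact inv_mul_cancel₀ hm0.ne'
  have hrow : ∀ v, logMean (m⁻¹ * w x) (m⁻¹ * w v) * Q x v = m⁻¹ * k * Q x v := by
    intro v
    by_cases h : G.Adj x v
    · have hvx : v ≠ x := fun e => G.loopless.irrefl x (e ▸ h)
      simp only [w, ↓reduceIte, if_neg (G.loopless.irrefl x), if_neg hvx, if_pos h, add_zero,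
        zero_add, mul_one]
      rw [logMean_mul_inv_self (inv_pos.mpr hm0) hD1]
    · simp [Q, srwKernel, h]
  have hk : 0 ≤ k := div_nonneg (by linarith) (mul_nonneg (by linarith) (Real.log_nonneg hD1.le))
  have hgam : 0 ≤ gam Q g x :=
    Finset.sum_nonneg fun v _ => mul_nonneg (sq_nonneg _) (srwKernel_nonneg x v)
  calc k / 2 * gam Q g x
      ≤ k * (m⁻¹ * π x) * gam Q g x := by
        rw [div_eq_mul_one_div]
        gcongr
        rw [le_inv_mul_iff₀ hm0]
        linarith
    _ = π x * ∑ v, (g v - g x) ^ 2 * logMean (m⁻¹ * w x) (m⁻¹ * w v) * Q x v := by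
        simp only [gam, Finset.mul_sum, mul_assoc, hrow]
        exact Finset.sum_congr rfl fun v _ => by ring
    _ ≤ logEnergy Q π (fun u => m⁻¹ * w u) g :=
        logEnergy_ge_row srwKernel_nonneg srwMeasure_nonneg srw_detailed_balance
          (fun z => mul_nonneg (inv_pos.mpr hm0).le (hw z)) g x

end SimpleRandomWalk

theorem gradient_estimate_simple_random_walk_general
    {X : Type*} [Fintype X] [DecidableEq X]
    (G : SimpleGraph X) [DecidableRel G.Adj]
    (Q : X → X → ℝ) (π : X → ℝ) (κ : ℝ)
    (hQ : ∀ x y, Q x y = if G.Adj x y then ((G.degree x : ℝ))⁻¹ else 0)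
    (hπ : ∀ x, π x = (G.degree x : ℝ) / ∑ v, (G.degree v : ℝ))
    (D : ℕ) (hD : D = Finset.univ.sup fun x => G.degree x) (hD2 : 2 ≤ D)
    (hGE : ∀ ρ : X → ℝ, (∀ z, 0 ≤ ρ z) → ∑ z, ρ z * π z = 1 → ∀ f : X → ℝ, ∀ t : ℝ, 0 ≤ t →
      (1 / 2) * ∑ u, ∑ v,
          (heat Q t f v - heat Q t f u) ^ 2 * logMean (ρ u) (ρ v) * Q u v * π u ≤
        Real.exp (-2 * κ * t) * ((1 / 2) * ∑ u, ∑ v,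
          (f v - f u) ^ 2 * logMean (heat Q t ρ u) (heat Q t ρ v) * Q u v * π u)) :
    ∀ f : X → ℝ, ∀ x : X, ∀ t : ℝ, 0 ≤ t →
      gam Q (heat Q t f) x ≤
        (D * Real.log D / ((D : ℝ) - 1)) * Real.exp (-2 * κ * t) *
          ⨆ z, |heat Q t (gam Q f) z| := by
  intro f x t ht
  obtain rfl : Q = srwKernel G := funext₂ hQ
  obtain rfl : π = srwMeasure G := funext hπ
  have hdeg : ∀ v, (G.degree v : ℝ) ≤ D := fun v => by
    rw [hD]
    exact_mod_cast Finset.le_sup (f := fun x => G.degree x) (Finset.mem_univ v)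
  have hD1 : (1 : ℝ) < D := by exact_mod_cast hD2
  set k := ((D : ℝ) - 1) / (D * Real.log D)
  have hk : 0 < k := div_pos (by linarith) (mul_pos (by linarith) (Real.log_pos hD1))
  set M := ⨆ z, |heat (srwKernel G) t (gam (srwKernel G) f) z|
  have hM : 0 ≤ M := Real.iSup_nonneg fun z => abs_nonneg _
  rw [show (D : ℝ) * Real.log D / (D - 1) = k⁻¹ by rw [inv_div]]
  rcases (G.degree x).eq_zero_or_pos with hx | hx
  · rw [gam_srwKernel_of_degree_eq_zero hx]
    positivity
  obtain ⟨ρ, hρ0, hρ1, hρ⟩ := exists_density_gam_le_logEnergy hx hdeg hD1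
  have key : k / 2 * gam (srwKernel G) (heat (srwKernel G) t f) x ≤
      Real.exp (-2 * κ * t) * (1 / 2 * M) :=
    (hρ _).trans <| (hGE ρ hρ0 hρ1 f t ht).trans <| mul_le_mul_of_nonneg_left
      (logEnergy_heat_le srwKernel_nonneg srwMeasure_nonneg srw_detailed_balance hρ0 hρ1 ht f)
      (Real.exp_pos _).le
  calc gam (srwKernel G) (heat (srwKernel G) t f) x
      = k⁻¹ * 2 * (k / 2 * gam (srwKernel G) (heat (srwKernel G) t f) x) := by
        field_simp
    _ ≤ k⁻¹ * 2 * (Real.exp (-2 * κ * t) * (1 / 2 * M)) := by gcongr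
    _ = k⁻¹ * Real.exp (-2 * κ * t) * M := by ring

/-- **Gradient estimate with explicit constant** for a simple random walk on a finite
connected graph: if the global gradient estimate with constant `κ` holds, then
`Γ(P_t f)(x) ≤ c·e^{-2κt}·‖P_tΓ(f)‖_∞` with `c = D·log D/(D-1)`, `D` the maximal degree. -/
theorem gradient_estimate_simple_random_walk
    {X : Type*} [Fintype X] [DecidableEq X]
    (G : SimpleGraph X) [DecidableRel G.Adj] (hconn : G.Connected)
    (Q : X → X → ℝ) (π : X → ℝ) (κ : ℝ)
    (hQ : ∀ x y, Q x y = if G.Adj x y then ((G.degree x : ℝ))⁻¹ else 0)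
    (hπ : ∀ x, π x = (G.degree x : ℝ) / ∑ v, (G.degree v : ℝ))
    (D : ℕ) (hD : D = Finset.univ.sup fun x => G.degree x) (hD2 : 2 ≤ D)
    (hGE : ∀ ρ : X → ℝ, (∀ z, 0 ≤ ρ z) → ∑ z, ρ z * π z = 1 → ∀ f : X → ℝ, ∀ t : ℝ, 0 ≤ t →
      (1 / 2) * ∑ u, ∑ v,
          (heat Q t f v - heat Q t f u) ^ 2 * logMean (ρ u) (ρ v) * Q u v * π u ≤
        Real.exp (-2 * κ * t) * ((1 / 2) * ∑ u, ∑ v,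
          (f v - f u) ^ 2 * logMean (heat Q t ρ u) (heat Q t ρ v) * Q u v * π u)) :
    ∀ f : X → ℝ, ∀ x : X, ∀ t : ℝ, 0 ≤ t →
      gam Q (heat Q t f) x ≤
        (D * Real.log D / ((D : ℝ) - 1)) * Real.exp (-2 * κ * t) *
          ⨆ z, |heat Q t (gam Q f) z| :=
  gradient_estimate_simple_random_walk_general G Q π κ hQ hπ D hD hD2 hGE
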